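/- Let 𝒰₁,…,𝒰_m be subspaces of ℝ^M whose direct sum is a subspace 𝒰, and for each k let A_k be a matrix whose columns are unit vectors lying in 𝒰_k, with U_k an orthonormal basis of 𝒰_k. Then inf_{δ∈𝒰,‖δ‖₂=1} Σ_k ‖δᵀA_k‖₁ ≥ ( min_k inf_{δ_k∈𝒰_k,‖δ_k‖₂=1} ‖δ_kᵀA_k‖₁ ) · ( inf_{δ∈𝒰,‖δ‖₂=1} Σ_k ‖δᵀU_k‖₂ ). -/
import Mathlib
open Matrix

noncomputable def dot {n : ℕ} (x y : Fin n → ℝ) : ℝ := ∑ i, x i * y i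
noncomputable def nrm {n : ℕ} (x : Fin n → ℝ) : ℝ := Real.sqrt (∑ i, x i ^ 2)

lemma dot_mulVec' {M n : ℕ} (δ : Fin M → ℝ) (U : Matrix (Fin M) (Fin n) ℝ)
    (w : Fin n → ℝ) : dot δ (U.mulVec w) = dot (vecMul δ U) w := by
  simp only [dot, Matrix.mulVec, Matrix.vecMul, dotProduct]
  simp_rw [Finset.mul_sum, Finset.sum_mul]
  rw [Finset.sum_comm]
  congr 1; ext j; congr 1; ext i; ring

lemma vecMul_of_mulVec {M n : ℕ} {U : Matrix (Fin M) (Fin n) ℝ}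
    (hU : Uᵀ * U = 1) (v : Fin n → ℝ) : vecMul (U.mulVec v) U = v := by
  rw [← Matrix.mulVec_transpose, Matrix.mulVec_mulVec, hU, Matrix.one_mulVec]

lemma nrm_eq_sqrt_dot {n : ℕ} (x : Fin n → ℝ) : nrm x = Real.sqrt (dot x x) := by
  simp [nrm, dot, sq]

lemma nrm_nonneg' {n : ℕ} (x : Fin n → ℝ) : 0 ≤ nrm x := Real.sqrt_nonneg _

lemma nrm_eq_zero' {n : ℕ} {x : Fin n → ℝ} (h : nrm x = 0) : x = 0 := by
  have h2 : ∑ i, x i ^ 2 = 0 := by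
    have hle := Real.sqrt_eq_zero'.mp h
    have hge : 0 ≤ ∑ i, x i ^ 2 := Finset.sum_nonneg fun i _ => sq_nonneg _
    linarith
  funext i
  have := Finset.sum_eq_zero_iff_of_nonneg (fun i _ => sq_nonneg (x i)) |>.mp h2 i (Finset.mem_univ i)
  exact pow_eq_zero_iff (by norm_num) |>.mp this

lemma nrm_smul' {n : ℕ} (t : ℝ) (x : Fin n → ℝ) : nrm (t • x) = |t| * nrm x := by
  simp only [nrm, Pi.smul_apply, smul_eq_mul, mul_pow, ← Finset.mul_sum]
  rw [Real.sqrt_mul (sq_nonneg t), Real.sqrt_sq_eq_abs]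

lemma nrm_mulVec' {M n : ℕ} {U : Matrix (Fin M) (Fin n) ℝ}
    (hU : Uᵀ * U = 1) (v : Fin n → ℝ) : nrm (U.mulVec v) = nrm v := by
  rw [nrm_eq_sqrt_dot, nrm_eq_sqrt_dot]
  congr 1
  rw [dot_mulVec', vecMul_of_mulVec hU]

lemma dot_smul_left' {n : ℕ} (t : ℝ) (x y : Fin n → ℝ) : dot (t • x) y = t * dot x y := by
  simp [dot, Finset.mul_sum, mul_assoc]

theorem stmt18 {M m : ℕ} (hm : 0 < m) (r nn : Fin m → ℕ)
    (U : ∀ k : Fin m, Matrix (Fin M) (Fin (r k)) ℝ)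
    (hU : ∀ k, (U k)ᵀ * U k = 1)
    (hdirect : ∀ w : (k : Fin m) → Fin (r k) → ℝ,
      (∑ k, (U k).mulVec (w k)) = 0 → ∀ k, w k = 0)
    (A : ∀ k : Fin m, Matrix (Fin M) (Fin (nn k)) ℝ)
    (hA : ∀ k j, (∃ w : Fin (r k) → ℝ, (fun i => A k i j) = (U k).mulVec w) ∧
      nrm (fun i => A k i j) = 1) :
    (⨅ k : Fin m, sInf {s | ∃ (δ : Fin M → ℝ) (w : Fin (r k) → ℝ),
        δ = (U k).mulVec w ∧ nrm δ = 1 ∧ s = ∑ j, |dot δ (fun i => A k i j)|}) *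
      sInf {s | ∃ (δ : Fin M → ℝ) (w : (k : Fin m) → Fin (r k) → ℝ),
        δ = (∑ k, (U k).mulVec (w k)) ∧ nrm δ = 1 ∧
          s = ∑ k, nrm (Matrix.vecMul δ (U k))} ≤
    sInf {s | ∃ (δ : Fin M → ℝ) (w : (k : Fin m) → Fin (r k) → ℝ),
        δ = (∑ k, (U k).mulVec (w k)) ∧ nrm δ = 1 ∧
          s = ∑ k, ∑ j, |dot δ (fun i => A k i j)|} := by
  set setk : Fin m → Set ℝ := fun k => {s | ∃ (δ : Fin M → ℝ) (w : Fin (r k) → ℝ),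
        δ = (U k).mulVec w ∧ nrm δ = 1 ∧ s = ∑ j, |dot δ (fun i => A k i j)|} with hsetk
  set B : Set ℝ := {s | ∃ (δ : Fin M → ℝ) (w : (k : Fin m) → Fin (r k) → ℝ),
        δ = (∑ k, (U k).mulVec (w k)) ∧ nrm δ = 1 ∧
          s = ∑ k, nrm (Matrix.vecMul δ (U k))} with hB
  set S : Set ℝ := {s | ∃ (δ : Fin M → ℝ) (w : (k : Fin m) → Fin (r k) → ℝ),
        δ = (∑ k, (U k).mulVec (w k)) ∧ nrm δ = 1 ∧
          s = ∑ k, ∑ j, |dot δ (fun i => A k i j)|} with hS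
  set c : ℝ := ⨅ k : Fin m, sInf (setk k) with hc
  -- nonnegativity of each sInf (setk k)
  have hck_nonneg : ∀ k, 0 ≤ sInf (setk k) := by
    intro k
    apply Real.sInf_nonneg
    rintro s ⟨δ, w, -, -, rfl⟩
    exact Finset.sum_nonneg fun j _ => abs_nonneg _
  have hc_nonneg : 0 ≤ c := Real.iInf_nonneg hck_nonneg
  have hc_le : ∀ k, c ≤ sInf (setk k) := by
    intro k
    exact ciInf_le ⟨0, by rintro x ⟨k', rfl⟩; exact hck_nonneg k'⟩ k
  -- key pointwise estimate
  have key : ∀ (k : Fin m) (δ : Fin M → ℝ),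
      sInf (setk k) * nrm (vecMul δ (U k)) ≤ ∑ j, |dot δ (fun i => A k i j)| := by
    intro k δ
    set p : Fin (r k) → ℝ := vecMul δ (U k) with hp
    have hdotcol : ∀ j, ∃ w : Fin (r k) → ℝ, (fun i => A k i j) = (U k).mulVec w ∧
        dot δ (fun i => A k i j) = dot p w := by
      intro j
      obtain ⟨w, hw⟩ := (hA k j).1
      exact ⟨w, hw, by rw [hw, dot_mulVec']⟩
    by_cases hp0 : p = 0
    · have : ∀ j, dot δ (fun i => A k i j) = 0 := by
        intro j
        obtain ⟨w, -, hw2⟩ := hdotcol j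
        rw [hw2, hp0]
        simp [dot]
      rw [hp0]
      have : ∑ j, |dot δ (fun i => A k i j)| = 0 :=
        Finset.sum_eq_zero fun j _ => by rw [this j, abs_zero]
      rw [this]
      have : nrm (0 : Fin (r k) → ℝ) = 0 := by simp [nrm]
      rw [this, mul_zero]
    · have hppos : 0 < nrm p := by
        rcases lt_or_eq_of_le (nrm_nonneg' p) with h | h
        · exact h
        · exact absurd (nrm_eq_zero' h.symm) hp0
      set t : ℝ := (nrm p)⁻¹ with ht
      have htpos : 0 < t := inv_pos.mpr hppos
      set δk : Fin M → ℝ := (U k).mulVec (t • p) with hδk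
      have hδknrm : nrm δk = 1 := by
        rw [hδk, nrm_mulVec' (hU k), nrm_smul', abs_of_pos htpos, ht,
          inv_mul_cancel₀ hppos.ne']
      have hmem : (∑ j, |dot δk (fun i => A k i j)|) ∈ setk k :=
        ⟨δk, t • p, rfl, hδknrm, rfl⟩
      have hbdd : BddBelow (setk k) := ⟨0, by
        rintro s ⟨δ', w', -, -, rfl⟩
        exact Finset.sum_nonneg fun j _ => abs_nonneg _⟩
      have hle : sInf (setk k) ≤ ∑ j, |dot δk (fun i => A k i j)| := csInf_le hbdd hmem
      have heq : ∀ j, nrm p * |dot δk (fun i => A k i j)| = |dot δ (fun i => A k i j)| := by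
        intro j
        obtain ⟨w, hw1, hw2⟩ := hdotcol j
        have : dot δk (fun i => A k i j) = t * dot p w := by
          rw [hw1, hδk, dot_mulVec', vecMul_of_mulVec (hU k), dot_smul_left']
        rw [this, hw2, abs_mul, abs_of_pos htpos, ← mul_assoc, ht,
          mul_inv_cancel₀ hppos.ne', one_mul]
      calc sInf (setk k) * nrm p ≤ (∑ j, |dot δk (fun i => A k i j)|) * nrm p :=
            mul_le_mul_of_nonneg_right hle (le_of_lt hppos)
        _ = ∑ j, nrm p * |dot δk (fun i => A k i j)| := by
            rw [Finset.sum_mul]; congr 1; ext j; ring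
        _ = ∑ j, |dot δ (fun i => A k i j)| := Finset.sum_congr rfl fun j _ => heq j
  have hBbdd : BddBelow B := ⟨0, by
    rintro s ⟨δ, w, -, -, rfl⟩
    exact Finset.sum_nonneg fun k _ => nrm_nonneg' _⟩
  by_cases hSne : S.Nonempty
  · apply le_csInf hSne
    rintro s ⟨δ, w, hδ, hδ1, rfl⟩
    have hBle : sInf B ≤ ∑ k, nrm (vecMul δ (U k)) :=
      csInf_le hBbdd ⟨δ, w, hδ, hδ1, rfl⟩
    calc c * sInf B ≤ c * ∑ k, nrm (vecMul δ (U k)) :=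
          mul_le_mul_of_nonneg_left hBle hc_nonneg
      _ = ∑ k, c * nrm (vecMul δ (U k)) := Finset.mul_sum _ _ _
      _ ≤ ∑ k, sInf (setk k) * nrm (vecMul δ (U k)) :=
          Finset.sum_le_sum fun k _ =>
            mul_le_mul_of_nonneg_right (hc_le k) (nrm_nonneg' _)
      _ ≤ ∑ k, ∑ j, |dot δ (fun i => A k i j)| :=
          Finset.sum_le_sum fun k _ => key k δ
  · have hBempty : B = ∅ := by
      rw [Set.eq_empty_iff_forall_notMem]
      rintro s ⟨δ, w, hδ, hδ1, -⟩
      exact hSne ⟨_, δ, w, hδ, hδ1, rfl⟩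
    have hSempty : S = ∅ := Set.not_nonempty_iff_eq_empty.mp hSne
    rw [hBempty, hSempty, Real.sInf_empty]
    simp
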